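/- Consider a greedy sequential allocation over a finite set A of k arms with budget n rounds and positive weights U_{t,i} > 0, where in each round t the pulled arm I_t is any arm maximizing U_{t,i}/N_{t,i} (convention U/0 = +∞), N_{t,i} being the pulls of arm i before round t. Let σ_i² > 0 for i ∈ A, σ_max² = max_{i∈A} σ_i², and δ ∈ (0,1). Let J be an arm with maximal total pulls and ℓ the last round with I_ℓ = J, and suppose: (a) U_{ℓ,i} ≥ σ_i² for all i ∈ A; (b) U_{ℓ,J} ≤ σ_J² · (1 + 2√(log(1/δ)/(N_{ℓ,J} − 1)) + 2 log(1/δ)/(N_{ℓ,J} − 1)) / (1 − 2√(log(1/δ)/(N_{ℓ,J} − 1))); and (c) N_{ℓ,J} − 1 ≥ n/k − 2 > 4 log(1/δ). Then for every arm i ∈ A, the total pull count satisfies N_i ≥ (σ_i²/σ_max²) · α · (n/k − 1), where α = (1 − 2√(log(1/δ)/(n/k − 2))) / (1 + 2√(log(1/δ)/(n/k − 2)) + 2 log(1/δ)/(n/k − 2)). -/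

import Mathlib

open Finset Real
open scoped ENNReal NNReal

/-! At the last round `ℓ` in which `J` is pulled the greedy rule gives
`U ℓ i / N ℓ i ≤ U ℓ J / N ℓ J`, hence `N i ≥ N ℓ i ≥ (U ℓ i / U ℓ J) · N ℓ J`.
By (a) and (b), `U ℓ i / U ℓ J ≥ (σ_i² / σ_J²) · α(N ℓ J − 1)`, and `α(m)` increases with the
sample size `m`, so (c) lets us replace `α(N ℓ J − 1)` by `α(n/k − 2)` and `N ℓ J` by `n/k − 1`. -/

theorem ENNReal.mul_le_mul_of_ofReal_div_natCast_le {a b : ℝ} {p q : ℕ} (ha : 0 < a)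
    (hb : 0 ≤ b) (hq : 0 < q) (h : ENNReal.ofReal a / p ≤ ENNReal.ofReal b / q) :
    a * q ≤ b * p := by
  have hp : 0 < p := by
    refine Nat.pos_of_ne_zero fun hp => ?_
    have hfin : ENNReal.ofReal b / q ≠ ⊤ :=
      ENNReal.div_ne_top ENNReal.ofReal_ne_top (by exact_mod_cast hq.ne')
    simp [hp, ENNReal.div_zero (ENNReal.ofReal_pos.mpr ha).ne', hfin] at h
  rw [← ENNReal.ofReal_natCast, ← ENNReal.ofReal_natCast,
    ← ENNReal.ofReal_div_of_pos (by exact_mod_cast hp),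
    ← ENNReal.ofReal_div_of_pos (by exact_mod_cast hq),
    ENNReal.ofReal_le_ofReal_iff (by positivity),
    div_le_div_iff₀ (by exact_mod_cast hp) (by exact_mod_cast hq)] at h
  exact h

/-- `α` of the statement as a function of `L = log (1 / δ)` and the sample size `m`. -/
noncomputable def varianceConfidenceFactor (L m : ℝ) : ℝ :=
  (1 - 2 * √(L / m)) / (1 + 2 * √(L / m) + 2 * L / m)

section varianceConfidenceFactor

variable {L m : ℝ}

theorem sqrt_div_lt_half (hL : 0 ≤ L) (hm : 4 * L < m) : √(L / m) < 1 / 2 := by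
  rw [sqrt_lt' (by norm_num), div_lt_iff₀ (by linarith)]
  linarith

theorem one_add_two_sqrt_div_add_pos (hL : 0 ≤ L) (hm : 4 * L < m) :
    0 < 1 + 2 * √(L / m) + 2 * L / m := by
  have : 0 ≤ 2 * L / m := div_nonneg (by linarith) (by linarith)
  positivity

theorem varianceConfidenceFactor_nonneg (hL : 0 ≤ L) (hm : 4 * L < m) :
    0 ≤ varianceConfidenceFactor L m :=
  div_nonneg (by linarith [sqrt_div_lt_half hL hm]) (one_add_two_sqrt_div_add_pos hL hm).le

theorem varianceConfidenceFactor_monotoneOn (hL : 0 ≤ L) :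
    MonotoneOn (varianceConfidenceFactor L) (Set.Ioi (4 * L)) := by
  intro x hx m hm hxm
  have hx₀ : 0 < x := by linarith [Set.mem_Ioi.mp hx]
  have hdiv : L / m ≤ L / x := div_le_div_of_nonneg_left hL hx₀ hxm
  have hsqrt : √(L / m) ≤ √(L / x) := sqrt_le_sqrt hdiv
  have h2div : 2 * L / m ≤ 2 * L / x := div_le_div_of_nonneg_left (by linarith) hx₀ hxm
  exact div_le_div₀ (by linarith [sqrt_div_lt_half hL hm]) (by linarith)
    (one_add_two_sqrt_div_add_pos hL hm) (by linarith)

theorem mul_varianceConfidenceFactor_le {u w : ℝ} (hL : 0 ≤ L) (hm : 4 * L < m)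
    (h : u ≤ w * (1 + 2 * √(L / m) + 2 * L / m) / (1 - 2 * √(L / m))) :
    u * varianceConfidenceFactor L m ≤ w := by
  rw [le_div_iff₀ (by linarith [sqrt_div_lt_half hL hm])] at h
  rw [varianceConfidenceFactor, mul_div_assoc', div_le_iff₀ (one_add_two_sqrt_div_add_pos hL hm)]
  exact h

end varianceConfidenceFactor

theorem greedy_allocation_pull_lower_bound_with_variance_ucb_general
    {ι : Type*} [Fintype ι] [DecidableEq ι]
    (k : ℕ)
    (n : ℕ) (U : ℕ → ι → ℝ) (hU : ∀ t i, 0 < U t i)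
    (I : ℕ → ι)
    (N : ℕ → ι → ℕ)
    (hN : ∀ t i, N t i = ((Finset.range t).filter (fun m => I m = i)).card)
    (hgreedy : ∀ t < n, ∀ j : ι,
      ENNReal.ofReal (U t j) / (N t j : ℝ≥0∞)
        ≤ ENNReal.ofReal (U t (I t)) / (N t (I t) : ℝ≥0∞))
    (v : ι → ℝ) (hv : ∀ i, 0 < v i)
    (vmax : ℝ) (hvmax : IsGreatest (Set.range v) vmax)
    (δ : ℝ) (hδ : δ ∈ Set.Ioo (0 : ℝ) 1)
    (J : ι)
    (l : ℕ) (hl : l < n) (hlJ : I l = J)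
    (ha : ∀ i : ι, v i ≤ U l i)
    (hb : U l J ≤ v J *
      (1 + 2 * Real.sqrt (Real.log (1 / δ) / ((N l J : ℝ) - 1))
         + 2 * Real.log (1 / δ) / ((N l J : ℝ) - 1))
      / (1 - 2 * Real.sqrt (Real.log (1 / δ) / ((N l J : ℝ) - 1))))
    (hc1 : (N l J : ℝ) - 1 ≥ (n : ℝ) / k - 2)
    (hc2 : (n : ℝ) / k - 2 > 4 * Real.log (1 / δ)) :
    ∀ i : ι, (N n i : ℝ) ≥ v i / vmax *
      ((1 - 2 * Real.sqrt (Real.log (1 / δ) / ((n : ℝ) / k - 2)))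
        / (1 + 2 * Real.sqrt (Real.log (1 / δ) / ((n : ℝ) / k - 2))
             + 2 * Real.log (1 / δ) / ((n : ℝ) / k - 2)))
      * ((n : ℝ) / k - 1) := by
  intro i
  set α := varianceConfidenceFactor (log (1 / δ))
  have hL : 0 ≤ log (1 / δ) := log_nonneg (one_le_one_div hδ.1 hδ.2.le)
  have hm : 4 * log (1 / δ) < (N l J : ℝ) - 1 := by linarith
  have hUJ : U l J * α (N l J - 1) ≤ v J := mul_varianceConfidenceFactor_le hL hm hb
  have hgreedy_l : U l i * N l J ≤ U l J * N l i :=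
    ENNReal.mul_le_mul_of_ofReal_div_natCast_le (hU l i) (hU l J).le
      (by exact_mod_cast (by linarith : (0 : ℝ) < N l J)) (hlJ ▸ hgreedy l hl i)
  have hvi : v i / vmax ≤ v i / v J :=
    div_le_div_of_nonneg_left (hv i).le (hv J) (hvmax.2 ⟨J, rfl⟩)
  have hvi_div_nonneg : 0 ≤ v i / v J := div_nonneg (hv i).le (hv J).le
  calc v i / vmax * α (n / k - 2) * (n / k - 1)
      ≤ v i / v J * α (N l J - 1) * N l J :=
        mul_le_mul (mul_le_mul hvi (varianceConfidenceFactor_monotoneOn hL hc2 hm hc1)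
          (varianceConfidenceFactor_nonneg hL hc2) hvi_div_nonneg) (by linarith) (by linarith)
          (mul_nonneg hvi_div_nonneg (varianceConfidenceFactor_nonneg hL hm))
    _ ≤ U l i / U l J * N l J := by
        gcongr
        rw [div_mul_eq_mul_div, div_le_div_iff₀ (hv J) (hU l J), mul_assoc, mul_comm _ (U l J)]
        exact (mul_le_mul_of_nonneg_left hUJ (hv i).le).trans
          (mul_le_mul_of_nonneg_right (ha i) (hv J).le)
    _ ≤ N l i := by
        rw [div_mul_eq_mul_div, div_le_iff₀ (hU l J)]
        linarith
    _ ≤ N n i := by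
        rw [hN, hN]
        exact_mod_cast card_le_card (filter_subset_filter _ (range_subset_range.mpr hl.le))

/-- Greedy sequential allocation over a finite type of `k` arms with
budget `n` rounds and time-varying positive weights `U t i`: in each round `t < n` the
pulled arm `I t` maximizes `U t i / N t i`, where `N t i = #{ℓ < t : I ℓ = i}` (convention
`x / 0 = ∞`, in `ℝ≥0∞`).  Given positive variances `v i = σ_i²` with maximum `vmax`,
`δ ∈ (0,1)`, an arm `J` with maximal total pulls, and `ℓ` the last round with `I ℓ = J`,
suppose (a) `U ℓ i ≥ v i` for all `i`; (b) `U ℓ J` is at most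
`v J · (1 + 2√(log(1/δ)/(N ℓ J − 1)) + 2 log(1/δ)/(N ℓ J − 1)) / (1 − 2√(log(1/δ)/(N ℓ J − 1)))`;
and (c) `N ℓ J − 1 ≥ n/k − 2 > 4 log(1/δ)`.  Then every arm `i` satisfies
`N_i ≥ (v i / vmax) · α · (n/k − 1)` with
`α = (1 − 2√(log(1/δ)/(n/k − 2))) / (1 + 2√(log(1/δ)/(n/k − 2)) + 2 log(1/δ)/(n/k − 2))`. -/
theorem greedy_allocation_pull_lower_bound_with_variance_ucb
    {ι : Type*} [Fintype ι] [DecidableEq ι] [Nonempty ι]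
    (k : ℕ) (hk : Fintype.card ι = k)
    (n : ℕ) (U : ℕ → ι → ℝ) (hU : ∀ t i, 0 < U t i)
    (I : ℕ → ι)
    (N : ℕ → ι → ℕ)
    (hN : ∀ t i, N t i = ((Finset.range t).filter (fun m => I m = i)).card)
    (hgreedy : ∀ t < n, ∀ j : ι,
      ENNReal.ofReal (U t j) / (N t j : ℝ≥0∞)
        ≤ ENNReal.ofReal (U t (I t)) / (N t (I t) : ℝ≥0∞))
    (v : ι → ℝ) (hv : ∀ i, 0 < v i)
    (vmax : ℝ) (hvmax : IsGreatest (Set.range v) vmax)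
    (δ : ℝ) (hδ : δ ∈ Set.Ioo (0 : ℝ) 1)
    (J : ι) (hJ : ∀ i : ι, N n i ≤ N n J)
    (l : ℕ) (hl : l < n) (hlJ : I l = J)
    (hlast : ∀ t, l < t → t < n → I t ≠ J)
    (ha : ∀ i : ι, v i ≤ U l i)
    (hb : U l J ≤ v J *
      (1 + 2 * Real.sqrt (Real.log (1 / δ) / ((N l J : ℝ) - 1))
         + 2 * Real.log (1 / δ) / ((N l J : ℝ) - 1))
      / (1 - 2 * Real.sqrt (Real.log (1 / δ) / ((N l J : ℝ) - 1))))
    (hc1 : (N l J : ℝ) - 1 ≥ (n : ℝ) / k - 2)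
    (hc2 : (n : ℝ) / k - 2 > 4 * Real.log (1 / δ)) :
    ∀ i : ι, (N n i : ℝ) ≥ v i / vmax *
      ((1 - 2 * Real.sqrt (Real.log (1 / δ) / ((n : ℝ) / k - 2)))
        / (1 + 2 * Real.sqrt (Real.log (1 / δ) / ((n : ℝ) / k - 2))
             + 2 * Real.log (1 / δ) / ((n : ℝ) / k - 2)))
      * ((n : ℝ) / k - 1) :=
  greedy_allocation_pull_lower_bound_with_variance_ucb_general k n U hU I N hN hgreedy v hv vmax
    hvmax δ hδ J l hl hlJ ha hb hc1 hc2
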